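/- Let E be a field, p a prime, and suppose L, F are two distinct degree-p cyclic extensions of E inside E(p) such that N(F/E)N(F'/E) = E* for the p+1 distinct degree-p intermediate fields of LF/E. If F' is a third intermediate field of LF/E of degree p over E distinct from L and F, then LF' = LF and E* ⊆ N(LF/L). -/
import Mathlib


/-- The norm group `N(L/E)` of an intermediate field `L` of `Ω/E`. -/
noncomputable def normGroup {E Ω : Type*} [Field E] [Field Ω] [Algebra E Ω]
    (L : IntermediateField E Ω) : Subgroup Eˣ :=
  (Units.map (Algebra.norm E : L →* E)).range

section Aux
open Module Polynomial IntermediateField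

lemma normA {L K : Type*} [Field L] [Field K] [Algebra L K]
    [FiniteDimensional L K] [Algebra.IsSeparable L K] (x : K)
    (h : (minpoly L x).natDegree = Module.finrank L K) :
    Algebra.norm L x = (-1) ^ Module.finrank L K * (minpoly L x).coeff 0 := by
  have hint : IsIntegral L x := Algebra.IsIntegral.isIntegral x
  have h1 : finrank L L⟮x⟯ = (minpoly L x).natDegree := adjoin.finrank hint
  have h2 : finrank L L⟮x⟯ * finrank L⟮x⟯ K = finrank L K :=
    Module.finrank_mul_finrank L L⟮x⟯ K
  have hpos : 0 < finrank L K := finrank_pos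
  have h3 : finrank L⟮x⟯ K = 1 := by nlinarith [h1.trans h, h2]
  rw [Algebra.norm_eq_norm_adjoin L x, h3, pow_one, ← adjoin.powerBasis_gen hint,
    Algebra.PowerBasis.norm_gen_eq_coeff_zero_minpoly]
  rw [adjoin.powerBasis_gen, adjoin.powerBasis_dim, minpoly_gen, h]

lemma normB {E M L K : Type*} [Field E] [Field M] [Field L] [Field K]
    [Algebra E M] [Algebra E L] [Algebra E K] [Algebra L K] [Algebra M K]
    [IsScalarTower E L K] [IsScalarTower E M K]
    [FiniteDimensional E M] [FiniteDimensional L K]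
    [Algebra.IsSeparable E M] [Algebra.IsSeparable L K]
    (hME : Module.finrank E M = Module.finrank L K)
    (a : M)
    (hc : (∃ c : E, algebraMap E M c = a) ∨
      (minpoly L (algebraMap M K a)).natDegree = Module.finrank L K) :
    Algebra.norm L (algebraMap M K a) = algebraMap E L (Algebra.norm E a) := by
  rcases hc with ⟨c, rfl⟩ | hdeg
  · rw [← IsScalarTower.algebraMap_apply, IsScalarTower.algebraMap_apply E L K,
      Algebra.norm_algebraMap, Algebra.norm_algebraMap, map_pow, hME]
  · have hint : IsIntegral E a := Algebra.IsIntegral.isIntegral a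
    have hintK : IsIntegral E (algebraMap M K a) := hint.map (IsScalarTower.toAlgHom E M K)
    have hintL : IsIntegral L (algebraMap M K a) := hintK.tower_top
    have hminE : minpoly E (algebraMap M K a) = minpoly E a :=
      minpoly.algebraMap_eq (algebraMap M K).injective a
    have hdvd : minpoly L (algebraMap M K a) ∣
        (minpoly E a).map (algebraMap E L) := by
      rw [← hminE]; exact minpoly.dvd_map_of_isScalarTower E L _
    have hmapne : (minpoly E a).map (algebraMap E L) ≠ 0 :=
      ((minpoly.monic hint).map _).ne_zero
    have hle1 : (minpoly E a).natDegree ≤ Module.finrank E M := minpoly.natDegree_le a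
    have hle2 : Module.finrank L K ≤ (minpoly E a).natDegree := by
      rw [← hdeg, ← (minpoly.monic hint).natDegree_map (algebraMap E L)]
      exact Polynomial.natDegree_le_natDegree (Polynomial.degree_le_of_dvd hdvd hmapne)
    have hdegE : (minpoly E a).natDegree = Module.finrank E M :=
      le_antisymm hle1 (hME ▸ hle2)
    have heq : minpoly L (algebraMap M K a) = (minpoly E a).map (algebraMap E L) := by
      refine (Polynomial.eq_of_monic_of_dvd_of_natDegree_le
        (minpoly.monic hintL) ((minpoly.monic hint).map _) hdvd ?_).symm
      rw [(minpoly.monic hint).natDegree_map, hdeg, hdegE, hME]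
    rw [normA _ hdeg, normA a (hdegE.trans rfl), heq, Polynomial.coeff_map, map_mul, map_pow,
      map_neg, map_one, hME]

noncomputable def extEquiv {E Ω : Type*} [Field E] [Field Ω] [Algebra E Ω]
    {A B : IntermediateField E Ω} (h : A ≤ B) :
    ↥B ≃ₐ[E] ↥(extendScalars h) :=
  { toFun := fun x => ⟨x.1, x.2⟩
    invFun := fun x => ⟨x.1, x.2⟩
    left_inv := fun x => rfl
    right_inv := fun x => rfl
    map_mul' := fun x y => rfl
    map_add' := fun x y => rfl
    commutes' := fun c => rfl }

lemma finrank_ext {E Ω : Type*} [Field E] [Field Ω] [Algebra E Ω]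
    {A B : IntermediateField E Ω} (h : A ≤ B) :
    Module.finrank E ↥(extendScalars h) = Module.finrank E ↥B :=
  (extEquiv h).symm.toLinearEquiv.finrank_eq

lemma finrank_tower {E Ω : Type*} [Field E] [Field Ω] [Algebra E Ω]
    {A B : IntermediateField E Ω} (h : A ≤ B) :
    Module.finrank E ↥A * Module.finrank ↥A ↥(extendScalars h) = Module.finrank E ↥B := by
  rw [← finrank_ext h]
  exact Module.finrank_mul_finrank E ↥A ↥(extendScalars h)

lemma finrank_dvd_of_le {E Ω : Type*} [Field E] [Field Ω] [Algebra E Ω]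
    {A B : IntermediateField E Ω} (h : A ≤ B) :
    Module.finrank E ↥A ∣ Module.finrank E ↥B :=
  Dvd.intro _ (finrank_tower h)


end Aux

set_option maxHeartbeats 1000000 in
set_option synthInstance.maxHeartbeats 200000 in
open Module Polynomial IntermediateField in
/-- From the proof of Proposition 3.3: let `L, F` be distinct degree-`p` cyclic extensions
of `E` inside `E(p)` (an ambient Galois extension `Ω/E` all of whose finite subextensions
have `p`-power degree) such that the product of the norm groups of any two distinct
degree-`p` intermediate fields of `LF/E` is all of `E*`.  Then for any third degree-`p`
intermediate field `F'` of `LF/E` distinct from `L` and `F` one has `LF' = LF`, and every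
element of `E*` is a norm from `LF` to `L`. -/
theorem comp_eq_and_units_le_norm_of_products_full
    (p : ℕ) (hp : p.Prime) (E Ω : Type*) [Field E] [Field Ω] [Algebra E Ω] [IsGalois E Ω]
    (hpro : ∀ L : IntermediateField E Ω, FiniteDimensional E L →
      ∃ k : ℕ, Module.finrank E L = p ^ k)
    (L F : IntermediateField E Ω) (hLF : L ≠ F)
    (hLdeg : Module.finrank E L = p) (hFdeg : Module.finrank E F = p)
    (hLgal : IsGalois E L) (hFgal : IsGalois E F)
    (hLcyc : IsCyclic (L ≃ₐ[E] L)) (hFcyc : IsCyclic (F ≃ₐ[E] F))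
    (hprod : ∀ A B : IntermediateField E Ω, A ≤ L ⊔ F → B ≤ L ⊔ F →
      Module.finrank E A = p → Module.finrank E B = p → A ≠ B →
      normGroup A ⊔ normGroup B = ⊤)
    (F' : IntermediateField E Ω) (hF'le : F' ≤ L ⊔ F)
    (hF'deg : Module.finrank E F' = p) (hF'L : F' ≠ L) (hF'F : F' ≠ F) :
    L ⊔ F' = L ⊔ F ∧
    ∀ x : Eˣ, Units.map (algebraMap E L).toMonoidHom x ∈
      (Units.map (Algebra.norm L :
        ↥(IntermediateField.extendScalars (show L ≤ L ⊔ F from le_sup_left)) →* L)).range := by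
  classical
  have hppos : 0 < p := hp.pos
  haveI : FiniteDimensional E L := FiniteDimensional.of_finrank_pos (hLdeg ▸ hppos)
  haveI : FiniteDimensional E F := FiniteDimensional.of_finrank_pos (hFdeg ▸ hppos)
  haveI : FiniteDimensional E F' := FiniteDimensional.of_finrank_pos (hF'deg ▸ hppos)
  haveI : FiniteDimensional E ↥(L ⊔ F) := IntermediateField.finiteDimensional_sup L F
  haveI : FiniteDimensional E ↥(L ⊔ F') := IntermediateField.finiteDimensional_sup L F'
  have hFnotleL : ¬ F ≤ L := fun h =>
    hLF (eq_of_le_of_finrank_eq h (hFdeg.trans hLdeg.symm)).symm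
  have hF'notleL : ¬ F' ≤ L := fun h =>
    hF'L (eq_of_le_of_finrank_eq h (hF'deg.trans hLdeg.symm))
  set K' := IntermediateField.extendScalars (show L ≤ L ⊔ F from le_sup_left) with hK'def
  have htower : Module.finrank E ↥L * Module.finrank ↥L ↥K' = Module.finrank E ↥(L ⊔ F) :=
    finrank_tower _
  have hm1 : Module.finrank ↥L ↥K' ≠ 1 := by
    intro h1
    have h2 : Module.finrank E ↥(L ⊔ F) = p := by rw [← htower, h1, mul_one, hLdeg]
    have h3 := eq_of_le_of_finrank_eq (le_sup_left : L ≤ L ⊔ F) (hLdeg.trans h2.symm)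
    exact hFnotleL (h3 ▸ (le_sup_right : F ≤ L ⊔ F))
  obtain ⟨k, hk⟩ := hpro (L ⊔ F) inferInstance
  have hle : Module.finrank E ↥(L ⊔ F) ≤ p ^ 2 := by
    have := IntermediateField.finrank_sup_le (E1 := L) (E2 := F)
    rw [hLdeg, hFdeg, ← pow_two] at this; exact this
  have hkle : k ≤ 2 := by
    by_contra hgt
    exact absurd (hk ▸ hle) (by
      push_neg
      exact Nat.pow_lt_pow_right hp.one_lt (by omega))
  have hsup_pos : 0 < Module.finrank E ↥(L ⊔ F) := finrank_pos
  have hpm : p * Module.finrank ↥L ↥K' = Module.finrank E ↥(L ⊔ F) := by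
    rw [← htower, hLdeg]
  have hmpos : 0 < Module.finrank ↥L ↥K' := by
    rcases Nat.eq_zero_or_pos (Module.finrank ↥L ↥K') with h0 | h
    · rw [h0, mul_zero] at hpm; omega
    · exact h
  have hpmk : p * Module.finrank ↥L ↥K' = p ^ k := hpm.trans hk
  have hk2 : k = 2 := by
    interval_cases k
    · rw [pow_zero] at hpmk
      exact absurd (Nat.eq_one_of_mul_eq_one_right hpmk) hp.one_lt.ne'
    · rw [pow_one] at hpmk
      exact absurd (Nat.eq_of_mul_eq_mul_left hppos (by rw [hpmk, mul_one])) hm1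
    · rfl
  have hK2 : Module.finrank E ↥(L ⊔ F) = p ^ 2 := by rw [hk, hk2]
  have hm : Module.finrank ↥L ↥K' = p :=
    Nat.eq_of_mul_eq_mul_left hppos (by rw [hpm, hK2, pow_two])
  haveI : FiniteDimensional ↥L ↥K' := FiniteDimensional.of_finrank_pos (hm ▸ hppos)
  -- Part 1
  have hsle : L ⊔ F' ≤ L ⊔ F := sup_le le_sup_left hF'le
  have part1 : L ⊔ F' = L ⊔ F := by
    obtain ⟨j, hj⟩ := hpro (L ⊔ F') inferInstance
    have hdvd2 : p ^ j ∣ p ^ 2 := by rw [← hj, ← hK2]; exact finrank_dvd_of_le hsle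
    have hjle : j ≤ 2 := (Nat.pow_dvd_pow_iff_le_right hp.one_lt).mp hdvd2
    have hdvd1 : p ∣ p ^ j := by
      rw [← hj, ← hLdeg]; exact finrank_dvd_of_le (le_sup_left : L ≤ L ⊔ F')
    have hj1 : 1 ≤ j := by
      by_contra h
      have : j = 0 := by omega
      rw [this, pow_zero, Nat.dvd_one] at hdvd1
      omega
    have hjne : j ≠ 1 := by
      intro h1
      rw [h1, pow_one] at hj
      have h3 := eq_of_le_of_finrank_eq (le_sup_left : L ≤ L ⊔ F') (hLdeg.trans hj.symm)
      exact hF'notleL (h3 ▸ (le_sup_right : F' ≤ L ⊔ F'))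
    have : j = 2 := by omega
    exact eq_of_le_of_finrank_eq hsle (by rw [hj, this, hK2])
  refine ⟨part1, ?_⟩
  -- separability instances
  haveI : Algebra.IsSeparable E Ω := IsGalois.to_isSeparable
  haveI : Algebra.IsSeparable ↥L Ω := Algebra.isSeparable_tower_top_of_isSeparable E ↥L Ω
  haveI : Algebra.IsSeparable ↥L ↥K' := Algebra.isSeparable_tower_bot_of_isSeparable ↥L ↥K' Ω
  -- key step
  have key : ∀ (M : IntermediateField E Ω), M ≤ L ⊔ F → Module.finrank E M = p →
      L ⊔ M = L ⊔ F → ∀ u : (↥M)ˣ, ∃ v : (↥K')ˣ,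
      Algebra.norm ↥L (v : ↥K') = algebraMap E ↥L (Algebra.norm E (u : ↥M)) := by
    intro M hMle hMdeg hMF u
    haveI : FiniteDimensional E ↥M := FiniteDimensional.of_finrank_pos (hMdeg ▸ hppos)
    haveI : Algebra.IsSeparable E ↥M := Algebra.isSeparable_tower_bot_of_isSeparable E ↥M Ω
    let incl : ↥M →+* ↥K' :=
      { toFun := fun a => ⟨a.1, hMle a.2⟩
        map_one' := rfl
        map_mul' := fun a b => rfl
        map_zero' := rfl
        map_add' := fun a b => rfl }
    letI : Algebra ↥M ↥K' := incl.toAlgebra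
    haveI : IsScalarTower E ↥M ↥K' := IsScalarTower.of_algebraMap_eq' rfl
    have hME : Module.finrank E ↥M = Module.finrank ↥L ↥K' := hMdeg.trans hm.symm
    set a : ↥M := (u : ↥M) with ha
    set xΩ : Ω := (a : Ω) with hxΩ
    have hcoe : algebraMap ↥K' Ω (algebraMap ↥M ↥K' a) = xΩ := rfl
    have hc : (∃ c : E, algebraMap E ↥M c = a) ∨
        (minpoly ↥L (algebraMap ↥M ↥K' a)).natDegree = Module.finrank ↥L ↥K' := by
      by_cases hbot : xΩ ∈ (⊥ : IntermediateField E Ω)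
      · left
        obtain ⟨c, hc⟩ := IntermediateField.mem_bot.mp hbot
        exact ⟨c, Subtype.ext (by rw [IntermediateField.coe_algebraMap_apply]; exact hc)⟩
      · right
        have hxM : xΩ ∈ M := a.2
        have hEx_le : E⟮xΩ⟯ ≤ M := by
          rw [IntermediateField.adjoin_le_iff]; simpa using hxM
        have hintE : IsIntegral E xΩ :=
          (Algebra.IsIntegral.isIntegral (R := E) a).map (IsScalarTower.toAlgHom E ↥M Ω)
        have hd : Module.finrank E ↥E⟮xΩ⟯ ∣ p := hMdeg ▸ finrank_dvd_of_le hEx_le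
        have hne1 : Module.finrank E ↥E⟮xΩ⟯ ≠ 1 := by
          intro h1
          rw [IntermediateField.finrank_eq_one_iff] at h1
          exact hbot (h1 ▸ IntermediateField.mem_adjoin_simple_self E xΩ)
        have hdeg : Module.finrank E ↥E⟮xΩ⟯ = p :=
          ((Nat.Prime.eq_one_or_self_of_dvd hp _ hd).resolve_left hne1)
        have hEM : E⟮xΩ⟯ = M := eq_of_le_of_finrank_eq hEx_le (by rw [hdeg, hMdeg])
        have hLx : IntermediateField.adjoin ↥L {xΩ} = K' := by
          apply IntermediateField.restrictScalars_injective E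
          rw [IntermediateField.restrictScalars_adjoin_eq_sup, hK'def,
            IntermediateField.extendScalars_restrictScalars, ← hMF, hEM]
        have hintL : IsIntegral ↥L xΩ := hintE.tower_top
        have hmp : minpoly ↥L (algebraMap ↥M ↥K' a) = minpoly ↥L xΩ := by
          rw [← hcoe, minpoly.algebraMap_eq (algebraMap ↥K' Ω).injective]
        rw [hmp, ← IntermediateField.adjoin.finrank hintL, hLx]
    refine ⟨Units.map (algebraMap ↥M ↥K').toMonoidHom u, ?_⟩
    exact normB hME a hc
  -- assemble
  intro x
  have htop := hprod F F' le_sup_right hF'le hFdeg hF'deg (Ne.symm hF'F)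
  have hx : x ∈ normGroup F ⊔ normGroup F' := htop ▸ Subgroup.mem_top x
  rw [Subgroup.mem_sup] at hx
  obtain ⟨y1, hy1, y2, hy2, hmul⟩ := hx
  obtain ⟨u1, rfl⟩ := hy1
  obtain ⟨u2, rfl⟩ := hy2
  obtain ⟨v1, hv1⟩ := key F le_sup_right hFdeg rfl u1
  obtain ⟨v2, hv2⟩ := key F' hF'le hF'deg part1 u2
  refine ⟨v1 * v2, ?_⟩
  apply Units.ext
  have hxval : (x : E) = Algebra.norm E (u1 : ↥F) * Algebra.norm E (u2 : ↥F') := by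
    rw [← hmul]; rfl
  show Algebra.norm ↥L ((v1 * v2 : (↥K')ˣ) : ↥K') = algebraMap E ↥L (x : E)
  rw [Units.val_mul, map_mul, hv1, hv2, ← map_mul, hxval]
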